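/- arXiv:1311.6027 — 2 statements merged into one kernel-verified Lean document; each statement's English description precedes it below -/
import Mathlib

section
/- Let 1/2 ≤ m < 1 and K ∈ (0,1). Set A = N^{-1}(m), A_K = (U_{1/K})^{-1}(m), and B_K = N^{-1}(m + (1/(2√π √(log(1/K)))) e^{-A²/2}) (assuming the argument is < 1). Then 1/(√2√(log(1/K)) + B_K) ≤ A_K - A ≤ (1/(√2√(log(1/K)) + A)) · exp((B_K² - A²)/2). -/
open Real Set

noncomputable def stdNormalCDF (x : ℝ) : ℝ :=
  (1 / Real.sqrt (2 * Real.pi)) * ∫ y in Set.Iic x, Real.exp (-(y ^ 2) / 2)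

noncomputable def U (K x : ℝ) : ℝ :=
  stdNormalCDF x - (1 / (2 * Real.sqrt Real.pi * Real.sqrt (Real.log K))) * Real.exp (-(x ^ 2) / 2)

/-! With `L = √2 √(log (1/K))`, the equation `U_{1/K}(A_K) = N(A)` says exactly
`L ∫_A^{A_K} e^{-t²/2} dt = e^{-A_K²/2}`. Since `A ≥ 0`, the integrand decreases on `[A, A_K]`,
so the integral lies between `(A_K - A) e^{-A_K²/2}` and `(A_K - A) e^{-A²/2}`. The first
estimate gives `(A_K - A) L ≤ 1`; the second, combined with `e^x ≥ 1 + x`, gives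
`1 ≤ (A_K - A) (L + (A + A_K)/2)`. Both turn into the stated bounds since `A ≤ A_K ≤ B_K`. -/

open MeasureTheory

lemma integrable_exp_neg_sq_div_two : Integrable fun t : ℝ => exp (-(t ^ 2) / 2) := by
  convert integrable_exp_neg_mul_sq (by norm_num : (0 : ℝ) < 1 / 2) using 2 with t
  ring_nf

lemma exp_neg_sq_div_two_le_of_le {s t : ℝ} (hs : 0 ≤ s) (hst : s ≤ t) :
    exp (-(t ^ 2) / 2) ≤ exp (-(s ^ 2) / 2) :=
  exp_le_exp.mpr (by nlinarith)

lemma stdNormalCDF_sub (x y : ℝ) :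
    stdNormalCDF y - stdNormalCDF x = (√(2 * π))⁻¹ * ∫ t in x..y, exp (-(t ^ 2) / 2) := by
  rw [stdNormalCDF, stdNormalCDF, ← mul_sub, one_div,
    intervalIntegral.integral_Iic_sub_Iic integrable_exp_neg_sq_div_two.integrableOn
      integrable_exp_neg_sq_div_two.integrableOn]

lemma stdNormalCDF_zero : stdNormalCDF 0 = 1 / 2 := by
  have half : ∫ t in Iic (0 : ℝ), exp (-(t ^ 2) / 2) = √(2 * π) / 2 := by
    rw [← neg_zero, ← integral_comp_neg_Ioi]
    convert integral_gaussian_Ioi (1 / 2) using 3 with t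
    · ring_nf
    · ring_nf
  rw [stdNormalCDF, half]
  field_simp

lemma stdNormalCDF_strictMono : StrictMono stdNormalCDF := fun x y hxy => by
  have hpos : 0 < ∫ t in x..y, exp (-(t ^ 2) / 2) :=
    intervalIntegral.intervalIntegral_pos_of_pos_on
      integrable_exp_neg_sq_div_two.intervalIntegrable (fun t _ => exp_pos _) hxy
  have := stdNormalCDF_sub x y
  have : 0 < (√(2 * π))⁻¹ := by positivity
  nlinarith

section GaussianIntegralBounds

variable {a b : ℝ}

lemma sub_mul_exp_le_integral (ha : 0 ≤ a) (hab : a ≤ b) :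
    (b - a) * exp (-(b ^ 2) / 2) ≤ ∫ t in a..b, exp (-(t ^ 2) / 2) := by
  simpa using intervalIntegral.integral_mono_on hab intervalIntegrable_const
    integrable_exp_neg_sq_div_two.intervalIntegrable
    fun t ht => exp_neg_sq_div_two_le_of_le (ha.trans ht.1) ht.2

lemma integral_le_sub_mul_exp (ha : 0 ≤ a) (hab : a ≤ b) :
    ∫ t in a..b, exp (-(t ^ 2) / 2) ≤ (b - a) * exp (-(a ^ 2) / 2) := by
  simpa using intervalIntegral.integral_mono_on hab
    integrable_exp_neg_sq_div_two.intervalIntegrable intervalIntegrable_const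
    fun t ht => exp_neg_sq_div_two_le_of_le ha ht.1

end GaussianIntegralBounds

section Gap

variable {a b c L : ℝ}

lemma sub_mul_le_one_of_gap (ha : 0 ≤ a) (hab : a ≤ b) (hL : 0 ≤ L)
    (hgap : L * ∫ t in a..b, exp (-(t ^ 2) / 2) = exp (-(b ^ 2) / 2)) :
    (b - a) * L ≤ 1 := by
  have h := mul_le_mul_of_nonneg_left (sub_mul_exp_le_integral ha hab) hL
  rw [hgap] at h
  nlinarith [exp_pos (-(b ^ 2) / 2)]

lemma one_le_sub_mul_of_gap (ha : 0 ≤ a) (hab : a ≤ b) (hL : 0 ≤ L)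
    (hgap : L * ∫ t in a..b, exp (-(t ^ 2) / 2) = exp (-(b ^ 2) / 2)) :
    1 ≤ (b - a) * (L + (a + b) / 2) := by
  have h := mul_le_mul_of_nonneg_left (integral_le_sub_mul_exp ha hab) hL
  rw [hgap] at h
  have hratio : exp (-(a ^ 2) / 2) * (1 + (a ^ 2 - b ^ 2) / 2) ≤ exp (-(b ^ 2) / 2) := by
    calc exp (-(a ^ 2) / 2) * (1 + (a ^ 2 - b ^ 2) / 2)
        ≤ exp (-(a ^ 2) / 2) * exp ((a ^ 2 - b ^ 2) / 2) :=
          mul_le_mul_of_nonneg_left (by linarith [add_one_le_exp ((a ^ 2 - b ^ 2) / 2)])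
            (exp_pos _).le
      _ = exp (-(b ^ 2) / 2) := by rw [← exp_add]; ring_nf
  nlinarith [exp_pos (-(a ^ 2) / 2)]

lemma one_div_add_le_sub_of_gap (ha : 0 ≤ a) (hab : a ≤ b) (hbc : b ≤ c) (hL : 0 ≤ L)
    (hgap : L * ∫ t in a..b, exp (-(t ^ 2) / 2) = exp (-(b ^ 2) / 2)) :
    1 / (L + c) ≤ b - a := by
  have h := one_le_sub_mul_of_gap ha hab hL hgap
  have hLc : 0 < L + c := by nlinarith
  rw [div_le_iff₀ hLc]
  nlinarith

lemma sub_le_one_div_add_mul_exp_of_gap (ha : 0 ≤ a) (hab : a ≤ b) (hbc : b ≤ c) (hL : 0 < L)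
    (hgap : L * ∫ t in a..b, exp (-(t ^ 2) / 2) = exp (-(b ^ 2) / 2)) :
    b - a ≤ 1 / (L + a) * exp ((c ^ 2 - a ^ 2) / 2) := by
  have h := sub_mul_le_one_of_gap ha hab hL.le hgap
  rw [one_div_mul_eq_div, le_div_iff₀ (by linarith)]
  nlinarith [add_one_le_exp ((c ^ 2 - a ^ 2) / 2)]

end Gap

lemma mul_integral_eq_of_U_eq_stdNormalCDF {K x y : ℝ} (hK : 0 < log K)
    (h : U K y = stdNormalCDF x) :
    √2 * √(log K) * ∫ t in x..y, exp (-(t ^ 2) / 2) = exp (-(y ^ 2) / 2) := by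
  have hsub := stdNormalCDF_sub x y
  rw [U] at h
  rw [sqrt_mul zero_le_two] at hsub
  have : 0 < √(log K) := sqrt_pos.mpr hK
  have : 0 < √π := sqrt_pos.mpr pi_pos
  have h2 : √2 * √2 = 2 := mul_self_sqrt zero_le_two
  field_simp at h hsub ⊢
  rw [← hsub]
  linear_combination h + √π * √(log K) * (stdNormalCDF y - stdNormalCDF x) * h2

theorem AK_minus_A_bounds_general (K m A AK BK : ℝ) (hK₁ : 0 < K) (hK₂ : K < 1)
    (hm₁ : 1 / 2 ≤ m)
    (hA : stdNormalCDF A = m)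
    (hAK₂ : U (1 / K) AK = m)
    (hBK : stdNormalCDF BK
        = m + (1 / (2 * Real.sqrt Real.pi * Real.sqrt (Real.log (1 / K))))
            * Real.exp (-(A ^ 2) / 2)) :
    1 / (Real.sqrt 2 * Real.sqrt (Real.log (1 / K)) + BK) ≤ AK - A ∧
    AK - A ≤ (1 / (Real.sqrt 2 * Real.sqrt (Real.log (1 / K)) + A))
        * Real.exp ((BK ^ 2 - A ^ 2) / 2) := by
  have hlog : 0 < log (1 / K) := log_pos (one_lt_one_div hK₁ hK₂)
  have hL : 0 < √2 * √(log (1 / K)) := by positivity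
  have hc : 0 ≤ 1 / (2 * √π * √(log (1 / K))) := by positivity
  have hgap := mul_integral_eq_of_U_eq_stdNormalCDF hlog (hAK₂.trans hA.symm)
  have hA0 : 0 ≤ A :=
    stdNormalCDF_strictMono.le_iff_le.mp (by rw [stdNormalCDF_zero, hA]; exact hm₁)
  rw [U] at hAK₂
  have hAAK : A ≤ AK :=
    stdNormalCDF_strictMono.le_iff_le.mp (by nlinarith [exp_pos (-(AK ^ 2) / 2)])
  have hAKBK : AK ≤ BK :=
    stdNormalCDF_strictMono.le_iff_le.mp
      (by nlinarith [exp_neg_sq_div_two_le_of_le hA0 hAAK])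
  exact ⟨one_div_add_le_sub_of_gap hA0 hAAK hAKBK hL.le hgap,
    sub_le_one_div_add_mul_exp_of_gap hA0 hAAK hAKBK hL hgap⟩

/-- the two-sided bound on A_K - A, where A = N⁻¹(m), A_K = (U_{1/K})⁻¹(m) and
B_K = N⁻¹(m + (1/(2√π √(log(1/K)))) e^{-A²/2}), all expressed via witnesses. -/
theorem AK_minus_A_bounds (K m A AK BK : ℝ) (hK₁ : 0 < K) (hK₂ : K < 1)
    (hm₁ : 1 / 2 ≤ m) (hm₂ : m < 1)
    (hA : stdNormalCDF A = m)
    (hAK₁ : -(Real.sqrt 2 * Real.sqrt (Real.log (1 / K))) ≤ AK)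
    (hAK₂ : U (1 / K) AK = m)
    (harg : m + (1 / (2 * Real.sqrt Real.pi * Real.sqrt (Real.log (1 / K))))
        * Real.exp (-(A ^ 2) / 2) < 1)
    (hBK : stdNormalCDF BK
        = m + (1 / (2 * Real.sqrt Real.pi * Real.sqrt (Real.log (1 / K))))
            * Real.exp (-(A ^ 2) / 2)) :
    1 / (Real.sqrt 2 * Real.sqrt (Real.log (1 / K)) + BK) ≤ AK - A ∧
    AK - A ≤ (1 / (Real.sqrt 2 * Real.sqrt (Real.log (1 / K)) + A))
        * Real.exp ((BK ^ 2 - A ^ 2) / 2) :=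
  AK_minus_A_bounds_general K m A AK BK hK₁ hK₂ hm₁ hA hAK₂ hBK
end

section
/- Let X be a nonnegative integrable martingale-terminal random variable with x₀ = E[X] = 1, and suppose P(K) = E[(K-X)^+] > 0 for 0 < K < 1. Define G(K) = K·P(1/K) for K > 1, and suppose m = P(X = 0) ∈ (0,1). Then for the Black–Scholes call function C_BS(K,σ) = N(d₁) - K·N(d₂) with d₁ = (-log K + σ²T/2)/(σ√T), d₂ = d₁ - σ√T, and any fixed T > 0, the implied volatility I_G(K) (defined by C_BS(K, I_G(K)) = G(K)) exists for all K ≥ 1, and satisfies I_C(K) = I_G(1/K) for 0 < K ≤ 1, where I_C is defined by C_BS(K, I_C(K)) = E[(X-K)^+]. -/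
/-!
The Black–Scholes price satisfies the put–call symmetry
`K · C_BS(1/K, σ) = C_BS(K, σ) - (1 - K)`: inverting the strike swaps `d₁` and `d₂` up to sign,
and `N(-x) = 1 - N(x)`. Together with put–call parity `C(K) - P(K) = 1 - K` this turns
`C_BS(K, σ) = C(K)` into `C_BS(1/K, σ) = G(1/K)`. Implied volatilities are unique because the vega
`K φ(d₂) √T` is positive, and `I_G(K)` exists for `K ≥ 1` by the intermediate value theorem:
there `C_BS(K, σ) ≤ σ √T` while `C_BS(K, σ) → 1` as `σ → ∞`, and `0 < G(K) < 1` because `X ≥ 0`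
with `E X = 1` is not almost surely zero.
-/

open Real Set MeasureTheory

/-- Black–Scholes call price with x₀ = 1, maturity T, strike K, volatility σ. -/
noncomputable def CBS (T K σ : ℝ) : ℝ :=
  stdNormalCDF ((-Real.log K + σ ^ 2 * T / 2) / (σ * Real.sqrt T))
    - K * stdNormalCDF ((-Real.log K + σ ^ 2 * T / 2) / (σ * Real.sqrt T) - σ * Real.sqrt T)

open Filter Topology

section StdNormal

open ProbabilityTheory

lemma continuous_gaussianPDFReal_std : Continuous (gaussianPDFReal 0 1) := by
  unfold gaussianPDFReal; fun_prop

lemma gaussianPDFReal_std_neg (x : ℝ) : gaussianPDFReal 0 1 (-x) = gaussianPDFReal 0 1 x := by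
  simp [gaussianPDFReal]

lemma gaussianPDFReal_std_le_one (x : ℝ) : gaussianPDFReal 0 1 x ≤ 1 := by
  have hπ : 1 ≤ √(2 * π) := Real.one_le_sqrt.2 (by linarith [Real.pi_gt_three])
  simp only [gaussianPDFReal, NNReal.coe_one, mul_one, sub_zero]
  exact mul_le_one₀ (inv_le_one_of_one_le₀ hπ) (exp_nonneg _)
    (exp_le_one_iff.2 (by nlinarith [sq_nonneg x]))

lemma stdNormalCDF_eq_integral (x : ℝ) :
    stdNormalCDF x = ∫ y in Iic x, gaussianPDFReal 0 1 y := by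
  rw [stdNormalCDF, ← integral_const_mul]
  simp [gaussianPDFReal]

lemma stdNormalCDF_eq_cdf (x : ℝ) : stdNormalCDF x = cdf (gaussianReal 0 1) x := by
  rw [cdf_eq_real, measureReal_def, gaussianReal_apply_eq_integral _ one_ne_zero,
    ENNReal.toReal_ofReal (integral_nonneg (gaussianPDFReal_nonneg 0 1)), stdNormalCDF_eq_integral]

lemma stdNormalCDF_nonneg (x : ℝ) : 0 ≤ stdNormalCDF x :=
  stdNormalCDF_eq_cdf x ▸ cdf_nonneg _ x

lemma tendsto_stdNormalCDF_atTop : Tendsto stdNormalCDF atTop (𝓝 1) := by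
  simpa only [← funext stdNormalCDF_eq_cdf] using tendsto_cdf_atTop (gaussianReal 0 1)

lemma tendsto_stdNormalCDF_atBot : Tendsto stdNormalCDF atBot (𝓝 0) := by
  simpa only [← funext stdNormalCDF_eq_cdf] using tendsto_cdf_atBot (gaussianReal 0 1)

lemma stdNormalCDF_neg (x : ℝ) : stdNormalCDF (-x) = 1 - stdNormalCDF x := by
  have hint : Integrable (gaussianPDFReal 0 1) := integrable_gaussianPDFReal 0 1
  have hreflect : ∫ y in Iic (-x), gaussianPDFReal 0 1 y = ∫ y in Ioi x, gaussianPDFReal 0 1 y := by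
    simpa [gaussianPDFReal_std_neg] using integral_comp_neg_Iic (-x) (gaussianPDFReal 0 1)
  rw [stdNormalCDF_eq_integral, stdNormalCDF_eq_integral, hreflect,
    ← integral_gaussianPDFReal_eq_one 0 one_ne_zero,
    ← intervalIntegral.integral_Iic_add_Ioi hint.integrableOn hint.integrableOn]
  ring

lemma hasDerivAt_stdNormalCDF (x : ℝ) : HasDerivAt stdNormalCDF (gaussianPDFReal 0 1 x) x := by
  have hint : Integrable (gaussianPDFReal 0 1) := integrable_gaussianPDFReal 0 1
  have hsplit : stdNormalCDF = fun x => stdNormalCDF 0 + ∫ y in (0)..x, gaussianPDFReal 0 1 y := by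
    ext x
    rw [stdNormalCDF_eq_integral, stdNormalCDF_eq_integral,
      ← intervalIntegral.integral_Iic_sub_Iic hint.integrableOn hint.integrableOn]
    ring
  rw [hsplit]
  exact ((continuous_gaussianPDFReal_std.integral_hasStrictDerivAt 0 x).hasDerivAt).const_add _

lemma stdNormalCDF_sub_le {a b : ℝ} (hab : a ≤ b) : stdNormalCDF b - stdNormalCDF a ≤ b - a := by
  have hderiv (x : ℝ) : HasDerivAt (fun x => x - stdNormalCDF x) (1 - gaussianPDFReal 0 1 x) x :=
    (hasDerivAt_id' x).sub (hasDerivAt_stdNormalCDF x)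
  have hmono : Monotone fun x => x - stdNormalCDF x :=
    monotone_of_deriv_nonneg (fun x => (hderiv x).differentiableAt) fun x => by
      rw [(hderiv x).deriv]
      linarith [gaussianPDFReal_std_le_one x]
  linarith [hmono hab]

end StdNormal

section BlackScholes

open ProbabilityTheory

variable {T K σ : ℝ}

noncomputable def bsD1 (T K σ : ℝ) : ℝ := (-log K + σ ^ 2 * T / 2) / (σ * √T)

lemma CBS_eq (T K σ : ℝ) :
    CBS T K σ = stdNormalCDF (bsD1 T K σ) - K * stdNormalCDF (bsD1 T K σ - σ * √T) := rfl

lemma bsD1_mul (hT : 0 < T) (hσ : σ ≠ 0) : bsD1 T K σ * (σ * √T) = -log K + σ ^ 2 * T / 2 :=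
  div_mul_cancel₀ _ (mul_ne_zero hσ (sqrt_pos.2 hT).ne')

lemma bsD1_eq_inv_add (hT : 0 < T) (hσ : σ ≠ 0) :
    bsD1 T K σ = -log K / √T * σ⁻¹ + √T / 2 * σ := by
  have hsT : √T ^ 2 = T := sq_sqrt hT.le
  have := (sqrt_pos.2 hT).ne'
  rw [bsD1]
  field_simp
  linear_combination (-σ ^ 2) * hsT

lemma bsD1_inv (hT : 0 < T) (hσ : σ ≠ 0) : bsD1 T K⁻¹ σ = -(bsD1 T K σ - σ * √T) := by
  rw [bsD1_eq_inv_add hT hσ, bsD1_eq_inv_add hT hσ, log_inv]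
  have := (sqrt_pos.2 hT).ne'
  field_simp
  ring

lemma gaussianPDFReal_bsD1 (hT : 0 < T) (hK : 0 < K) (hσ : σ ≠ 0) :
    gaussianPDFReal 0 1 (bsD1 T K σ) = K * gaussianPDFReal 0 1 (bsD1 T K σ - σ * √T) := by
  have hexp : -bsD1 T K σ ^ 2 / 2 = -(bsD1 T K σ - σ * √T) ^ 2 / 2 + log K := by
    linear_combination (-1 : ℝ) * bsD1_mul hT hσ + σ ^ 2 / 2 * sq_sqrt hT.le
  simp only [gaussianPDFReal, NNReal.coe_one, mul_one, sub_zero]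
  rw [hexp, exp_add, exp_log hK]
  ring

lemma hasDerivAt_CBS (hT : 0 < T) (hK : 0 < K) (hσ : σ ≠ 0) :
    HasDerivAt (CBS T K) (K * gaussianPDFReal 0 1 (bsD1 T K σ - σ * √T) * √T) σ := by
  have hd₁ : DifferentiableAt ℝ (bsD1 T K) σ := by
    have := mul_ne_zero hσ (sqrt_pos.2 hT).ne'
    unfold bsD1
    fun_prop (disch := assumption)
  have hd₁' := hd₁.hasDerivAt
  have hd₂ := hd₁'.sub ((hasDerivAt_id' σ).mul_const √T)
  have h : HasDerivAt (CBS T K) _ σ := ((hasDerivAt_stdNormalCDF _).comp σ hd₁').sub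
    (((hasDerivAt_stdNormalCDF _).comp σ hd₂).const_mul K)
  refine h.congr_deriv ?_
  rw [gaussianPDFReal_bsD1 hT hK hσ, Pi.sub_apply]
  ring

lemma strictMonoOn_CBS (hT : 0 < T) (hK : 0 < K) : StrictMonoOn (CBS T K) (Ioi 0) := by
  refine strictMonoOn_of_deriv_pos (convex_Ioi 0)
    (fun σ hσ => (hasDerivAt_CBS hT hK (ne_of_gt hσ)).continuousAt.continuousWithinAt)
    fun σ hσ => ?_
  rw [interior_Ioi] at hσ
  rw [(hasDerivAt_CBS hT hK (ne_of_gt hσ)).deriv]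
  have := gaussianPDFReal_pos 0 1 (bsD1 T K σ - σ * √T) one_ne_zero
  have := sqrt_pos.2 hT
  positivity

lemma CBS_le_mul_sqrt (hK : 1 ≤ K) (hσ : 0 ≤ σ) : CBS T K σ ≤ σ * √T := by
  have hN := stdNormalCDF_nonneg (bsD1 T K σ - σ * √T)
  have hlip := stdNormalCDF_sub_le (sub_le_self (bsD1 T K σ) (by positivity : 0 ≤ σ * √T))
  rw [CBS_eq]
  nlinarith

lemma tendsto_CBS_atTop (hT : 0 < T) : Tendsto (CBS T K) atTop (𝓝 1) := by
  have hinv : Tendsto (fun σ : ℝ => -log K / √T * σ⁻¹) atTop (𝓝 0) := by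
    simpa using tendsto_inv_atTop_zero.const_mul (-log K / √T)
  have hlin : Tendsto (fun σ : ℝ => √T / 2 * σ) atTop atTop :=
    tendsto_id.const_mul_atTop (by positivity)
  have hd₁ : Tendsto (bsD1 T K) atTop atTop := by
    refine (hinv.add_atTop hlin).congr' ?_
    filter_upwards [eventually_ne_atTop 0] with σ hσ
    rw [bsD1_eq_inv_add hT hσ]
  have hd₂ : Tendsto (fun σ => bsD1 T K σ - σ * √T) atTop atBot := by
    refine (hinv.add_atBot (tendsto_neg_atTop_atBot.comp hlin)).congr' ?_
    filter_upwards [eventually_ne_atTop 0] with σ hσ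
    rw [bsD1_eq_inv_add hT hσ, Function.comp_apply]
    ring
  have h := (tendsto_stdNormalCDF_atTop.comp hd₁).sub
    ((tendsto_stdNormalCDF_atBot.comp hd₂).const_mul K)
  rwa [mul_zero, sub_zero] at h

lemma mul_CBS_inv (hT : 0 < T) (hK : K ≠ 0) (hσ : σ ≠ 0) :
    K * CBS T K⁻¹ σ = CBS T K σ - (1 - K) := by
  have hd₂ : bsD1 T K⁻¹ σ - σ * √T = -bsD1 T K σ := by
    rw [bsD1_inv hT hσ]; ring
  rw [CBS_eq T K⁻¹, hd₂, bsD1_inv hT hσ, stdNormalCDF_neg, stdNormalCDF_neg, CBS_eq]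
  field_simp
  ring

lemma existsUnique_CBS_eq {T K c : ℝ} (hT : 0 < T) (hK : 1 ≤ K) (hc₀ : 0 < c) (hc₁ : c < 1) :
    ∃! σ, 0 < σ ∧ CBS T K σ = c := by
  have hK₀ : 0 < K := one_pos.trans_le hK
  have hsT : 0 < √T := sqrt_pos.2 hT
  have hσ₁ : 0 < c / (2 * √T) := by positivity
  have hlow : CBS T K (c / (2 * √T)) < c := by
    refine (CBS_le_mul_sqrt hK hσ₁.le).trans_lt ?_
    rw [div_mul_eq_div_div, div_mul_cancel₀ _ hsT.ne']
    linarith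
  obtain ⟨σ₂, hhigh, hσ₂⟩ := (((tendsto_CBS_atTop hT).eventually (eventually_gt_nhds hc₁)).and
    (eventually_ge_atTop (c / (2 * √T)))).exists
  have hcont : ContinuousOn (CBS T K) (Icc (c / (2 * √T)) σ₂) := fun σ hσ =>
    (hasDerivAt_CBS hT hK₀ (hσ₁.trans_le hσ.1).ne').continuousAt.continuousWithinAt
  obtain ⟨σ, hσ, hσc⟩ := intermediate_value_Icc hσ₂ hcont ⟨hlow.le, hhigh.le⟩
  refine ⟨σ, ⟨hσ₁.trans_le hσ.1, hσc⟩, fun τ ⟨hτ, hτc⟩ => ?_⟩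
  exact (strictMonoOn_CBS hT hK₀).injOn hτ (hσ₁.trans_le hσ.1) (hτc.trans hσc.symm)

end BlackScholes

section OptionPrices

variable {Ω : Type*} [MeasurableSpace Ω] (μ : Measure Ω) (X : Ω → ℝ)

noncomputable def callPrice (K : ℝ) : ℝ := ∫ ω, max (X ω - K) 0 ∂μ

noncomputable def putPrice (K : ℝ) : ℝ := ∫ ω, max (K - X ω) 0 ∂μ

variable {μ X}

lemma integrable_max_sub_const [IsFiniteMeasure μ] (hX : Integrable X μ) (K : ℝ) :
    Integrable (fun ω => max (X ω - K) 0) μ :=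
  (hX.sub (integrable_const K)).pos_part

lemma integrable_max_const_sub [IsFiniteMeasure μ] (hX : Integrable X μ) (K : ℝ) :
    Integrable (fun ω => max (K - X ω) 0) μ :=
  ((integrable_const K).sub hX).pos_part

lemma callPrice_sub_putPrice [IsProbabilityMeasure μ] (hX : Integrable X μ) (K : ℝ) :
    callPrice μ X K - putPrice μ X K = ∫ ω, X ω ∂μ - K := by
  rw [callPrice, putPrice,
    ← integral_sub (integrable_max_sub_const hX K) (integrable_max_const_sub hX K)]
  simp_rw [← neg_sub (X _) K, max_zero_sub_max_neg_zero_eq_self]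
  rw [integral_sub hX (integrable_const K), integral_const, probReal_univ, one_smul]

lemma putPrice_mono [IsFiniteMeasure μ] (hX : Integrable X μ) : Monotone (putPrice μ X) :=
  fun _ _ hKL => integral_mono (integrable_max_const_sub hX _) (integrable_max_const_sub hX _)
    fun ω => max_le_max (sub_le_sub_right hKL (X ω)) le_rfl

lemma putPrice_lt_self [IsProbabilityMeasure μ] (hX : Integrable X μ) (hX₀ : 0 ≤ᵐ[μ] X)
    (hmean : ∫ ω, X ω ∂μ ≠ 0) {k : ℝ} (hk : 0 < k) : putPrice μ X k < k := by
  have hmin : Integrable (fun ω => min (X ω) k) μ := hX.inf (integrable_const k)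
  have hmin₀ : 0 ≤ᵐ[μ] fun ω => min (X ω) k := by
    filter_upwards [hX₀] with ω hω using le_min hω hk.le
  have hput : putPrice μ X k = k - ∫ ω, min (X ω) k ∂μ := by
    have hpayoff (ω : Ω) : max (k - X ω) 0 = k - min (X ω) k := by
      rw [← max_sub_sub_left, sub_self]
    simp_rw [putPrice, hpayoff]
    rw [integral_sub (integrable_const k) hmin, integral_const, probReal_univ, one_smul]
  suffices hpos : ∫ ω, min (X ω) k ∂μ ≠ 0 by
    rw [hput]
    linarith [(integral_nonneg_of_ae hmin₀).lt_of_ne' hpos]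
  -- `min X k` vanishes exactly where `X` does, since `k > 0`
  refine fun hzero => hmean (integral_eq_zero_of_ae ?_)
  filter_upwards [(integral_eq_zero_iff_of_nonneg_ae hmin₀ hmin).1 hzero] with ω hω
  exact (min_eq_iff.1 hω).elim (fun h => h.1) fun h => absurd h.1 hk.ne'

end OptionPrices

theorem implied_vol_symmetry_general
    {Ω : Type*} [MeasurableSpace Ω] (ℙ : Measure Ω) [IsProbabilityMeasure ℙ]
    (X : Ω → ℝ) (hXpos : ∀ ω, 0 ≤ X ω)
    (hXint : Integrable X ℙ) (hXmean : ∫ ω, X ω ∂ℙ = 1)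
    (C P G : ℝ → ℝ)
    (hC : ∀ K, C K = ∫ ω, max (X ω - K) 0 ∂ℙ)
    (hP : ∀ K, P K = ∫ ω, max (K - X ω) 0 ∂ℙ)
    (hPpos : ∀ K, 0 < K → K < 1 → 0 < P K)
    (hG : ∀ K, 0 < K → G K = K * P (1 / K))
    (T : ℝ) (hT : 0 < T) :
    (∀ K : ℝ, 1 ≤ K → ∃! σ : ℝ, 0 < σ ∧ CBS T K σ = G K) ∧
    (∀ K : ℝ, 0 < K → K ≤ 1 → ∀ σ τ : ℝ,
      0 < σ → CBS T K σ = C K → 0 < τ → CBS T (1 / K) τ = G (1 / K) → σ = τ) := by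
  obtain rfl : C = callPrice ℙ X := funext hC
  obtain rfl : P = putPrice ℙ X := funext hP
  refine ⟨fun K hK => ?_, fun K hK₀ _ σ τ hσ hσC hτ hτG => ?_⟩
  · have hK₀ : 0 < K := one_pos.trans_le hK
    refine existsUnique_CBS_eq hT hK ?_ ?_ <;> rw [hG K hK₀]
    · -- `P` is increasing, so `P (1 / K) ≥ P (1 / (2 K)) > 0` also covers `K = 1`
      have hpos : 0 < putPrice ℙ X (1 / (2 * K)) :=
        hPpos _ (by positivity) ((div_lt_one (by positivity)).2 (by linarith))
      exact mul_pos hK₀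
        (hpos.trans_le (putPrice_mono hXint (one_div_le_one_div_of_le hK₀ (by linarith))))
    · calc K * putPrice ℙ X (1 / K) < K * (1 / K) :=
            mul_lt_mul_of_pos_left (putPrice_lt_self hXint (ae_of_all _ hXpos)
              (hXmean ▸ one_ne_zero) (by positivity)) hK₀
        _ = 1 := mul_one_div_cancel hK₀.ne'
  · have hσG : CBS T (1 / K) σ = G (1 / K) := by
      rw [hG _ (by positivity), one_div_one_div, one_div, eq_inv_mul_iff_mul_eq₀ hK₀.ne',
        mul_CBS_inv hT hK₀.ne' hσ.ne', hσC]
      linarith [callPrice_sub_putPrice hXint K]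
    exact (strictMonoOn_CBS hT (by positivity)).injOn hσ hτ (hσG.trans hτG.symm)

/-- for an asset price X with E X = 1 and mass m ∈ (0,1) at zero, the implied
volatility I_G of G(K) = K·P(1/K) exists (and is unique) for all K ≥ 1, and any implied
volatility of the call C(K) at strike K ≤ 1 coincides with I_G(1/K). -/
theorem implied_vol_symmetry
    {Ω : Type*} [MeasurableSpace Ω] (ℙ : Measure Ω) [IsProbabilityMeasure ℙ]
    (X : Ω → ℝ) (hXmeas : Measurable X) (hXpos : ∀ ω, 0 ≤ X ω)
    (hXint : Integrable X ℙ) (hXmean : ∫ ω, X ω ∂ℙ = 1)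
    (m : ℝ) (hm : m = (ℙ {ω | X ω = 0}).toReal) (hm₀ : 0 < m) (hm₁ : m < 1)
    (C P G : ℝ → ℝ)
    (hC : ∀ K, C K = ∫ ω, max (X ω - K) 0 ∂ℙ)
    (hP : ∀ K, P K = ∫ ω, max (K - X ω) 0 ∂ℙ)
    (hPpos : ∀ K, 0 < K → K < 1 → 0 < P K)
    (hG : ∀ K, 0 < K → G K = K * P (1 / K))
    (T : ℝ) (hT : 0 < T) :
    (∀ K : ℝ, 1 ≤ K → ∃! σ : ℝ, 0 < σ ∧ CBS T K σ = G K) ∧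
    (∀ K : ℝ, 0 < K → K ≤ 1 → ∀ σ τ : ℝ,
      0 < σ → CBS T K σ = C K → 0 < τ → CBS T (1 / K) τ = G (1 / K) → σ = τ) :=
  implied_vol_symmetry_general ℙ X hXpos hXint hXmean C P G hC hP hPpos hG T hT
end
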